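/- arXiv:2312.11258 — 2 statements merged into one kernel-verified Lean document; each statement's English description precedes it below -/
import Mathlib

section
/- For any prime p and any nonzero integer k, the identity U_p = U_p^k A^{p^{k-1}} U_p^{-k} B A^{p^{k+1}} U_p^{-k} B A^{p^{k-1}} B^{-1} holds in GL_2(Q), where A = [[1,0],[1,1]], B = [[0,1],[-1,0]], U_p = [[p,0],[0,1/p]]. -/
abbrev SL2Q := Matrix.SpecialLinearGroup (Fin 2) ℚ

/-- A = [[1,0],[1,1]] -/
def matA : SL2Q := ⟨!![1,0;1,1], by norm_num [Matrix.det_fin_two_of]⟩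
/-- B = [[0,1],[-1,0]] -/
def matB : SL2Q := ⟨!![0,1;-1,0], by norm_num [Matrix.det_fin_two_of]⟩
/-- Q_q = [[1,q],[0,1]] -/
def matQ (q : ℚ) : SL2Q := ⟨!![1,q;0,1], by norm_num [Matrix.det_fin_two_of]⟩
/-- U_p = [[p,0],[0,1/p]] -/
def matU (p : ℚ) (hp : p ≠ 0) : SL2Q := ⟨!![p,0;0,p⁻¹], by rw [Matrix.det_fin_two_of]; field_simp; norm_num⟩
/-- lower unipotent [[1,0],[x,1]] -/
def matL (x : ℚ) : SL2Q := ⟨!![1,0;x,1], by norm_num [Matrix.det_fin_two_of]⟩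

/-!
Put `t = p ^ k`. Then `U_p ^ k = U_t` and `U_p ^ (-k) = U_t⁻¹`, while the exponents of the
unipotent factors become `t / p` and `p * t`, so the identity is the specialisation of a
2 × 2 matrix identity valid for all nonzero rationals `p` and `t`. Indeed, conjugating by `U_t`
rescales the lower entry, `U_t L(x) U_t⁻¹ = L(x / t²)`, and `U_t⁻¹ B = B U_t`, so the right-hand
side is `L(1 / (p t)) · (B L(p t) B) · U_t · L(t / p) · B⁻¹`, which multiplies out to `U_p`.
-/

@[simp]
lemma coe_matU (a : ℚ) (ha : a ≠ 0) : (matU a ha : Matrix (Fin 2) (Fin 2) ℚ) = !![a, 0; 0, a⁻¹] :=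
  rfl

@[simp]
lemma coe_matL (x : ℚ) : (matL x : Matrix (Fin 2) (Fin 2) ℚ) = !![1, 0; x, 1] :=
  rfl

@[simp]
lemma coe_matB : (matB : Matrix (Fin 2) (Fin 2) ℚ) = !![0, 1; -1, 0] :=
  rfl

lemma matU_mul (a b : ℚ) (ha : a ≠ 0) (hb : b ≠ 0) :
    matU a ha * matU b hb = matU (a * b) (mul_ne_zero ha hb) := by
  ext : 1
  simp [mul_comm]

lemma matU_one : matU 1 one_ne_zero = 1 := by
  ext : 1
  simp [Matrix.one_fin_two]

lemma matU_zpow (a : ℚ) (ha : a ≠ 0) (k : ℤ) :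
    matU a ha ^ k = matU (a ^ k) (zpow_ne_zero k ha) := by
  induction k using Int.induction_on with
  | zero => simp [matU_one]
  | succ n ih => simp only [zpow_add_one, zpow_add_one₀ ha, ih, matU_mul]
  | pred n ih =>
    rw [zpow_sub_one, ih, mul_inv_eq_iff_eq_mul, matU_mul]
    congr 1
    rw [zpow_sub_one₀ ha, inv_mul_cancel_right₀ ha]

lemma matU_eq_prod_matU_matL_matB (p t : ℚ) (hp : p ≠ 0) (ht : t ≠ 0) :
    matU p hp = matU t ht * matL (t / p) * (matU t ht)⁻¹ * matB * matL (p * t) *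
      (matU t ht)⁻¹ * matB * matL (t / p) * matB⁻¹ := by
  ext : 1
  simp [Matrix.SpecialLinearGroup.coe_inv, Matrix.adjugate_fin_two_of]
  field_simp
  ring_nf

theorem stmt1_general (p : ℕ) (hp : p.Prime) (k : ℤ) :
    matU p (Nat.cast_ne_zero.mpr hp.ne_zero) =
      (matU p (Nat.cast_ne_zero.mpr hp.ne_zero))^k * matL ((p:ℚ)^(k-1)) *
      (matU p (Nat.cast_ne_zero.mpr hp.ne_zero))^(-k) * matB * matL ((p:ℚ)^(k+1)) *
      (matU p (Nat.cast_ne_zero.mpr hp.ne_zero))^(-k) * matB * matL ((p:ℚ)^(k-1)) * matB⁻¹ := by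
  have hp0 : (p : ℚ) ≠ 0 := Nat.cast_ne_zero.mpr hp.ne_zero
  rw [zpow_neg, matU_zpow, zpow_sub_one₀ hp0, zpow_add_one₀ hp0, ← div_eq_mul_inv,
    mul_comm _ (p : ℚ)]
  exact matU_eq_prod_matU_matL_matB _ _ hp0 _

theorem stmt1 (p : ℕ) (hp : p.Prime) (k : ℤ) (hk : k ≠ 0) :
    matU p (Nat.cast_ne_zero.mpr hp.ne_zero) =
      (matU p (Nat.cast_ne_zero.mpr hp.ne_zero))^k * matL ((p:ℚ)^(k-1)) *
      (matU p (Nat.cast_ne_zero.mpr hp.ne_zero))^(-k) * matB * matL ((p:ℚ)^(k+1)) *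
      (matU p (Nat.cast_ne_zero.mpr hp.ne_zero))^(-k) * matB * matL ((p:ℚ)^(k-1)) * matB⁻¹ :=
  stmt1_general p hp k
end

section
/- Let p be an odd prime, and let Q = [[1,2/p],[0,1]], A = [[1,0],[1,1]], U_p = [[p,0],[0,1/p]]. Then there exists an integer s such that U_p = Q^s A^{(p-1)/2} Q^{-1} A^{-p(p-1)/2}. In particular U_p lies in the subgroup generated by A and Q. -/
lemma matL_mul (x y : ℚ) : matL x * matL y = matL (x + y) := by
  apply Subtype.ext
  rw [Matrix.SpecialLinearGroup.coe_mul]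
  simp [matL, Matrix.SpecialLinearGroup.coe_mul, Matrix.mul_fin_two, add_comm]

lemma matQ_mul (x y : ℚ) : matQ x * matQ y = matQ (x + y) := by
  apply Subtype.ext
  rw [Matrix.SpecialLinearGroup.coe_mul]
  simp [matQ, Matrix.SpecialLinearGroup.coe_mul, Matrix.mul_fin_two, add_comm]

lemma matL_inv (x : ℚ) : (matL x)⁻¹ = matL (-x) := by
  apply inv_eq_of_mul_eq_one_right
  rw [matL_mul]
  apply Subtype.ext
  simp [matL, Matrix.one_fin_two]

lemma matQ_inv (x : ℚ) : (matQ x)⁻¹ = matQ (-x) := by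
  apply inv_eq_of_mul_eq_one_right
  rw [matQ_mul]
  apply Subtype.ext
  simp [matQ, Matrix.one_fin_two]

lemma matL_pow (x : ℚ) (n : ℕ) : matL x ^ n = matL (n * x) := by
  induction n with
  | zero => apply Subtype.ext; rw [pow_zero]; simp [matL, Matrix.one_fin_two]
  | succ k ih => rw [pow_succ, ih, matL_mul]; push_cast; ring_nf

lemma matQ_pow (x : ℚ) (n : ℕ) : matQ x ^ n = matQ (n * x) := by
  induction n with
  | zero => apply Subtype.ext; rw [pow_zero]; simp [matQ, Matrix.one_fin_two]
  | succ k ih => rw [pow_succ, ih, matQ_mul]; push_cast; ring_nf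

lemma matL_zpow (x : ℚ) (n : ℤ) : matL x ^ n = matL (n * x) := by
  cases n with
  | ofNat k => simpa using matL_pow x k
  | negSucc k =>
    rw [zpow_negSucc, matL_pow, matL_inv]
    norm_num
    ring_nf

lemma matQ_zpow (x : ℚ) (n : ℤ) : matQ x ^ n = matQ (n * x) := by
  cases n with
  | ofNat k => simpa using matQ_pow x k
  | negSucc k =>
    rw [zpow_negSucc, matQ_pow, matQ_inv]
    norm_num
    ring_nf

theorem stmt4 (p : ℕ) (hp : p.Prime) (hodd : Odd p) :
    (∃ s : ℤ, matU p (Nat.cast_ne_zero.mpr hp.ne_zero) =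
      (matQ (2/p))^s * matA^(((p:ℤ)-1)/2) * (matQ (2/p))⁻¹ * matA^(-((p:ℤ)*((p:ℤ)-1)/2))) ∧
    matU p (Nat.cast_ne_zero.mpr hp.ne_zero) ∈ Subgroup.closure {matA, matQ (2/p)} := by
  have hA : matA = matL 1 := rfl
  have hp0 : (p:ℚ) ≠ 0 := Nat.cast_ne_zero.mpr hp.ne_zero
  obtain ⟨t, ht⟩ := hodd
  have hm : ((p:ℤ)-1)/2 = t := by omega
  have hk : ((p:ℤ)*((p:ℤ)-1))/2 = p * t := by
    have : (p:ℤ) = 2*t+1 := by exact_mod_cast ht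
    rw [this]; ring_nf; omega
  have hpt : (p:ℚ) = 2*t+1 := by exact_mod_cast ht
  have key : matU p hp0 =
      (matQ (2/p))^(p:ℤ) * matA^(((p:ℤ)-1)/2) * (matQ (2/p))⁻¹ * matA^(-((p:ℤ)*((p:ℤ)-1)/2)) := by
    rw [hA, matQ_zpow, matL_zpow, matQ_inv, matL_zpow, hm, hk]
    apply Subtype.ext
    rw [Matrix.SpecialLinearGroup.coe_mul, Matrix.SpecialLinearGroup.coe_mul, Matrix.SpecialLinearGroup.coe_mul]
    simp only [matQ, matL, matU, Matrix.SpecialLinearGroup.coe_mul, Matrix.mul_fin_two]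
    push_cast
    rw [hpt]
    have h2t : (2*(t:ℚ)+1) ≠ 0 := by rw [← hpt]; exact hp0
    ext i j
    fin_cases i <;> fin_cases j <;>
      simp <;> field_simp <;> ring
  constructor
  · exact ⟨p, key⟩
  · rw [key]
    have h1 : matA ∈ Subgroup.closure {matA, matQ (2/p)} :=
      Subgroup.subset_closure (by simp)
    have h2 : matQ (2/p) ∈ Subgroup.closure {matA, matQ (2/p)} :=
      Subgroup.subset_closure (by simp)
    exact mul_mem (mul_mem (mul_mem (zpow_mem h2 _) (zpow_mem h1 _)) (inv_mem h2)) (zpow_mem h1 _)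
end
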